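/- arXiv:1311.0934 — 2 statements merged into one kernel-verified Lean document; each statement's English description precedes it below -/
import Mathlib

section
/- Let $f : [0,T] \to [0,\infty)$ be continuous with $f(0) = 0$, and suppose that for some constants $K \ge 0$, $\varepsilon \in (0,1)$ and every integer $N \ge 1$, $f(t) \le K\,\Theta(N) \int_0^t f(\tau)\, d\tau + K\, 2^{-N\varepsilon}$ for all $t \in [0,T]$, where $\Theta : [1,\infty) \to [1,\infty)$ is continuous nondecreasing with $\int_1^{\infty} \frac{ds}{\Theta(s)} = \infty$. Then $f \equiv 0$ on $[0,T]$. -/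
/-!
Let `F t = ∫₀ᵗ f`. Taking `N ≈ 1 + log₂ (1 / F t) / ε` in the hypothesis balances `2 ^ (-N ε)`
against `F t` and yields the Osgood inequality `F' = f ≤ 2 K ω(F)` while `0 < F < 1`, where
`ω s = s Θ(1 + log₂ (1 / s) / ε)`. A primitive `Ψ` of `1 / ω` tends to `-∞` at `0⁺` because
`∫₁^∞ ds / Θ s = ∞`, whereas `Ψ ∘ F` grows at most linearly; so `F` can never leave `0`.
With `F ≡ 0`, letting `N → ∞` in the hypothesis gives `f ≡ 0`.
-/

open MeasureTheory Set Filter Topology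

noncomputable def logScale (ε s : ℝ) : ℝ := 1 - Real.log s / (ε * Real.log 2)

section LogScale

variable {ε s : ℝ}

lemma one_lt_logScale (hε : 0 < ε) (hs0 : 0 < s) (hs1 : s < 1) : 1 < logScale ε s := by
  have : Real.log s / (ε * Real.log 2) < 0 :=
    div_neg_of_neg_of_pos (Real.log_neg hs0 hs1) (by positivity)
  unfold logScale
  linarith

lemma tendsto_logScale_nhdsGT_zero (hε : 0 < ε) : Tendsto (logScale ε) (𝓝[>] 0) atTop := by
  have hlog : Tendsto (fun s => Real.log s / (ε * Real.log 2)) (𝓝[>] 0) atBot :=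
    Real.tendsto_log_nhdsGT_zero.atBot_div_const (by positivity)
  exact tendsto_atTop_add_const_left _ 1 (tendsto_neg_atBot_atTop.comp hlog)

lemma hasDerivAt_logScale (hs : s ≠ 0) :
    HasDerivAt (logScale ε) (-(s⁻¹ / (ε * Real.log 2))) s :=
  ((Real.hasDerivAt_log hs).div_const _).const_sub 1

lemma exists_nat_le_logScale_and_two_rpow_le (hε : 0 < ε) (hs0 : 0 < s) (hs1 : s < 1) :
    ∃ N : ℕ, 1 ≤ N ∧ (N : ℝ) ≤ logScale ε s ∧ (2 : ℝ) ^ (-(N : ℝ) * ε) ≤ s := by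
  set L := -Real.log s / (ε * Real.log 2)
  have hc : 0 < ε * Real.log 2 := by positivity
  have hL : 0 < L := div_pos (neg_pos.2 (Real.log_neg hs0 hs1)) hc
  refine ⟨⌈L⌉₊, Nat.one_le_iff_ne_zero.2 (Nat.ceil_pos.2 hL).ne', ?_, ?_⟩
  · have : logScale ε s = L + 1 := by unfold logScale L; ring
    exact this ▸ (Nat.ceil_lt_add_one hL.le).le
  · rw [Real.rpow_def_of_pos two_pos, ← Real.le_log_iff_exp_le hs0]
    have := (div_le_iff₀ hc).1 (Nat.le_ceil L)
    nlinarith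

end LogScale

theorem tendsto_intervalIntegral_atTop_of_lintegral_Ioi_eq_top {g : ℝ → ℝ} {a : ℝ}
    (hg : LocallyIntegrableOn g (Ici a)) (hg0 : ∀ x ∈ Ioi a, 0 ≤ g x)
    (hdiv : ∫⁻ x in Ioi a, ENNReal.ofReal (g x) = ⊤) :
    Tendsto (fun u => ∫ x in a..u, g x) atTop atTop := by
  have hmeas : AEMeasurable (fun x => ENNReal.ofReal (g x)) (volume.restrict (Ioi a)) :=
    ((hg.aestronglyMeasurable.mono_measure
      (Measure.restrict_mono Ioi_subset_Ici_self le_rfl)).aemeasurable).ennreal_ofReal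
  have hlim := (aecover_Iic (μ := volume.restrict (Ioi a)) tendsto_id)
    |>.lintegral_tendsto_of_countably_generated hmeas
  rw [hdiv] at hlim
  rw [← ENNReal.tendsto_ofReal_nhds_top]
  refine hlim.congr' ?_
  filter_upwards [eventually_ge_atTop a] with u hu
  rw [id, Measure.restrict_restrict measurableSet_Iic, Iic_inter_Ioi,
    intervalIntegral.integral_of_le hu, ofReal_integral_eq_lintegral_ofReal]
  · exact (hg.integrableOn_compact_subset Icc_subset_Ici_self isCompact_Icc).mono_set
      Ioc_subset_Icc_self
  · filter_upwards [ae_restrict_mem measurableSet_Ioc] with x hx using hg0 x hx.1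

noncomputable def osgoodModulus (Θ : ℝ → ℝ) (ε s : ℝ) : ℝ := s * Θ (logScale ε s)

-- Substituting `u = logScale ε s` turns `ds / osgoodModulus Θ ε s` into `-(ε log 2) du / Θ u`.
noncomputable def osgoodPotential (Θ : ℝ → ℝ) (ε s : ℝ) : ℝ :=
  -(ε * Real.log 2) * ∫ u in (1 : ℝ)..logScale ε s, 1 / Θ u

section Potential

variable {Θ : ℝ → ℝ} {ε s : ℝ}

lemma osgoodModulus_pos (hε : 0 < ε) (hΘ1 : ∀ u, 1 ≤ u → 1 ≤ Θ u) (hs0 : 0 < s) (hs1 : s < 1) :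
    0 < osgoodModulus Θ ε s :=
  mul_pos hs0 (one_pos.trans_le (hΘ1 _ (one_lt_logScale hε hs0 hs1).le))

lemma le_two_mul_osgoodModulus_of_forall_nat {K a : ℝ} (hK : 0 ≤ K) (hε : 0 < ε)
    (hΘmono : MonotoneOn Θ (Ici 1)) (hΘ1 : ∀ u, 1 ≤ u → 1 ≤ Θ u) (hs0 : 0 < s) (hs1 : s < 1)
    (h : ∀ N : ℕ, 1 ≤ N → a ≤ K * Θ N * s + K * 2 ^ (-(N : ℝ) * ε)) :
    a ≤ 2 * K * osgoodModulus Θ ε s := by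
  obtain ⟨N, hN1, hNL, hNs⟩ := exists_nat_le_logScale_and_two_rpow_le hε hs0 hs1
  have hN1' : (1 : ℝ) ≤ N := by exact_mod_cast hN1
  have hΘN : Θ N ≤ Θ (logScale ε s) := hΘmono hN1' (hN1'.trans hNL) hNL
  have hΘL : 1 ≤ Θ (logScale ε s) := hΘ1 _ (hN1'.trans hNL)
  calc a ≤ K * Θ N * s + K * 2 ^ (-(N : ℝ) * ε) := h N hN1
    _ ≤ K * Θ (logScale ε s) * s + K * (Θ (logScale ε s) * s) := by
      gcongr
      exact hNs.trans (le_mul_of_one_le_left hs0.le hΘL)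
    _ = 2 * K * osgoodModulus Θ ε s := by unfold osgoodModulus; ring

lemma hasDerivAt_osgoodPotential (hε : 0 < ε) (hΘc : ContinuousOn Θ (Ici 1))
    (hΘ1 : ∀ u, 1 ≤ u → 1 ≤ Θ u) (hs0 : 0 < s) (hs1 : s < 1) :
    HasDerivAt (osgoodPotential Θ ε) (1 / osgoodModulus Θ ε s) s := by
  set v := logScale ε s
  have hv : 1 < v := one_lt_logScale hε hs0 hs1
  have hc : ContinuousOn (fun u => 1 / Θ u) (Ici 1) :=
    continuousOn_const.div hΘc fun u hu => (one_pos.trans_le (hΘ1 u hu)).ne'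
  have hint : HasDerivAt (fun w => ∫ u in (1 : ℝ)..w, 1 / Θ u) (1 / Θ v) v :=
    intervalIntegral.integral_hasDerivAt_right
      (hc.mono (by simpa [uIcc_of_le hv.le] using Icc_subset_Ici_self)).intervalIntegrable
      ((hc.mono Ioi_subset_Ici_self).stronglyMeasurableAtFilter isOpen_Ioi v hv)
      (hc.continuousAt (Ici_mem_nhds hv))
  have : 0 < Θ v := one_pos.trans_le (hΘ1 v hv.le)
  refine ((hint.comp s (hasDerivAt_logScale hs0.ne')).const_mul (-(ε * Real.log 2))).congr_deriv ?_
  simp only [osgoodModulus, v]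
  field_simp

lemma tendsto_osgoodPotential_nhdsGT_zero (hε : 0 < ε) (hΘc : ContinuousOn Θ (Ici 1))
    (hΘ1 : ∀ u, 1 ≤ u → 1 ≤ Θ u)
    (hdiv : ∫⁻ u in Ioi (1 : ℝ), ENNReal.ofReal (1 / Θ u) = ⊤) :
    Tendsto (osgoodPotential Θ ε) (𝓝[>] 0) atBot := by
  have hc : ContinuousOn (fun u => 1 / Θ u) (Ici 1) :=
    continuousOn_const.div hΘc fun u hu => (one_pos.trans_le (hΘ1 u hu)).ne'
  have hΦ := tendsto_intervalIntegral_atTop_of_lintegral_Ioi_eq_top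
    (hc.locallyIntegrableOn measurableSet_Ici)
    (fun u hu => one_div_nonneg.2 (zero_le_one.trans (hΘ1 u (le_of_lt hu)))) hdiv
  exact (hΦ.comp (tendsto_logScale_nhdsGT_zero hε)).const_mul_atTop_of_neg
    (neg_lt_zero.2 (by positivity))

end Potential

section Osgood

variable {F f ω Ψ : ℝ → ℝ} {δ M : ℝ}

lemma sub_le_mul_sub_of_osgood {a b : ℝ} (hab : a ≤ b) (hFc : ContinuousOn F (Icc a b))
    (hF' : ∀ t ∈ Ioo a b, HasDerivAt F (f t) t) (hFδ : ∀ t ∈ Icc a b, F t ∈ Ioo 0 δ)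
    (hω : ∀ s ∈ Ioo 0 δ, 0 < ω s) (hΨ' : ∀ s ∈ Ioo 0 δ, HasDerivAt Ψ (1 / ω s) s)
    (hfω : ∀ t ∈ Ioo a b, f t ≤ M * ω (F t)) :
    Ψ (F b) - Ψ (F a) ≤ M * (b - a) := by
  have hd : ∀ t ∈ Ioo a b, HasDerivAt (Ψ ∘ F) (1 / ω (F t) * f t) t := fun t ht =>
    (hΨ' _ (hFδ t (Ioo_subset_Icc_self ht))).comp t (hF' t ht)
  have hc : ContinuousOn (Ψ ∘ F) (Icc a b) := fun t ht =>
    (hΨ' _ (hFδ t ht)).continuousAt.comp_continuousWithinAt (hFc t ht)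
  refine (convex_Icc a b).image_sub_le_mul_sub_of_deriv_le hc ?_ ?_ a (left_mem_Icc.2 hab) b
    (right_mem_Icc.2 hab) hab <;> rw [interior_Icc]
  · exact fun t ht => (hd t ht).differentiableAt.differentiableWithinAt
  · intro t ht
    rw [(hd t ht).deriv, one_div_mul_eq_div,
      div_le_iff₀ (hω _ (hFδ t (Ioo_subset_Icc_self ht)))]
    exact hfω t ht

theorem eq_zero_of_osgood {T : ℝ} (hδ : 0 < δ) (hFc : ContinuousOn F (Icc 0 T)) (hF0 : F 0 = 0)
    (hFm : MonotoneOn F (Icc 0 T)) (hF' : ∀ t ∈ Ioo 0 T, HasDerivAt F (f t) t)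
    (hω : ∀ s ∈ Ioo 0 δ, 0 < ω s) (hΨ' : ∀ s ∈ Ioo 0 δ, HasDerivAt Ψ (1 / ω s) s)
    (hΨ : Tendsto Ψ (𝓝[>] 0) atBot)
    (hfω : ∀ t ∈ Ioo 0 T, F t ∈ Ioo 0 δ → f t ≤ M * ω (F t)) :
    ∀ t ∈ Icc 0 T, F t = 0 := by
  intro t ht
  by_contra hne
  have hpos : 0 < F t := (hF0.ge.trans (hFm ⟨le_rfl, ht.1.trans ht.2⟩ ht ht.1)).lt_of_ne' hne
  set b := min (F t) (δ / 2)
  have hb : 0 < b := lt_min hpos (half_pos hδ)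
  obtain ⟨x, hΨx, hx0, hxb⟩ : ∃ x, Ψ x < Ψ b - |M| * T ∧ x ∈ Ioo 0 b :=
    ((hΨ.eventually (eventually_lt_atBot _)).and (Ioo_mem_nhdsGT hb)).exists
  obtain ⟨t₁, ht₁, hFt₁⟩ : ∃ t₁ ∈ Icc 0 t, F t₁ = b :=
    intermediate_value_Icc ht.1 (hFc.mono (Icc_subset_Icc_right ht.2))
      ⟨hF0.le.trans hb.le, min_le_left _ _⟩
  obtain ⟨t₀, ht₀, hFt₀⟩ : ∃ t₀ ∈ Icc 0 t₁, F t₀ = x :=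
    intermediate_value_Icc ht₁.1 (hFc.mono (Icc_subset_Icc_right (ht₁.2.trans ht.2)))
      ⟨hF0.le.trans hx0.le, hxb.le.trans hFt₁.ge⟩
  have hsub : Icc t₀ t₁ ⊆ Icc 0 T := Icc_subset_Icc ht₀.1 (ht₁.2.trans ht.2)
  have hFδ : ∀ s ∈ Icc t₀ t₁, F s ∈ Ioo 0 δ := fun s hs =>
    ⟨hx0.trans_le (hFt₀ ▸ hFm (hsub (left_mem_Icc.2 ht₀.2)) (hsub hs) hs.1),
      (hFm (hsub hs) (hsub (right_mem_Icc.2 ht₀.2)) hs.2).trans_lt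
        (hFt₁ ▸ (min_le_right _ _).trans_lt (half_lt_self hδ))⟩
  have hsub' : Ioo t₀ t₁ ⊆ Ioo 0 T := Ioo_subset_Ioo ht₀.1 (ht₁.2.trans ht.2)
  have hinc := sub_le_mul_sub_of_osgood ht₀.2 (hFc.mono hsub) (fun s hs => hF' s (hsub' hs)) hFδ
    hω hΨ' fun s hs => hfω s (hsub' hs) (hFδ s (Ioo_subset_Icc_self hs))
  rw [hFt₀, hFt₁] at hinc
  have : M * (t₁ - t₀) ≤ |M| * T :=
    (mul_le_mul_of_nonneg_right (le_abs_self M) (sub_nonneg.2 ht₀.2)).trans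
      (mul_le_mul_of_nonneg_left (by linarith [ht₀.1, ht₁.2, ht.2]) (abs_nonneg M))
  linarith

end Osgood

lemma nonpos_of_forall_le_mul_two_rpow {a K ε : ℝ} (hε : 0 < ε)
    (h : ∀ N : ℕ, 1 ≤ N → a ≤ K * 2 ^ (-(N : ℝ) * ε)) : a ≤ 0 := by
  have hexp : Tendsto (fun N : ℕ => -(N : ℝ) * ε) atTop atBot := by
    simpa only [neg_mul, Function.comp_def] using
      tendsto_neg_atTop_atBot.comp (tendsto_natCast_atTop_atTop.atTop_mul_const hε)
  have hlim := ((tendsto_rpow_atBot_of_base_gt_one 2 one_lt_two).comp hexp).const_mul K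
  rw [mul_zero] at hlim
  exact ge_of_tendsto hlim ((eventually_ge_atTop 1).mono h)

open MeasureTheory in
theorem stmt_18_general (T : ℝ) (f : ℝ → ℝ)
    (hf : ContinuousOn f (Set.Icc 0 T))
    (hfpos : ∀ t ∈ Set.Icc 0 T, 0 ≤ f t)
    (K ε : ℝ) (hK : 0 ≤ K) (hε0 : 0 < ε)
    (Θ : ℝ → ℝ) (hΘcont : ContinuousOn Θ (Set.Ici 1))
    (hΘmono : MonotoneOn Θ (Set.Ici 1)) (hΘ1 : ∀ s : ℝ, 1 ≤ s → 1 ≤ Θ s)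
    (hΘdiv : ∫⁻ s in Set.Ioi (1 : ℝ), ENNReal.ofReal (1 / Θ s) = ⊤)
    (hyp : ∀ N : ℕ, 1 ≤ N → ∀ t ∈ Set.Icc 0 T,
      f t ≤ K * Θ N * (∫ τ in (0 : ℝ)..t, f τ) + K * 2 ^ (-(N : ℝ) * ε)) :
    ∀ t ∈ Set.Icc 0 T, f t = 0 := by
  set F : ℝ → ℝ := fun t => ∫ τ in (0 : ℝ)..t, f τ
  have hFc : ContinuousOn F (Icc 0 T) :=
    (intervalIntegral.continuousOn_primitive hf.integrableOn_Icc).congr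
      fun t ht => intervalIntegral.integral_of_le ht.1
  have hfi : ∀ t ∈ Icc 0 T, IntervalIntegrable f volume 0 t := fun t ht =>
    (hf.mono (by simpa [uIcc_of_le ht.1] using Icc_subset_Icc_right ht.2)).intervalIntegrable
  have hFm : MonotoneOn F (Icc 0 T) := fun s hs t ht hst =>
    intervalIntegral.integral_mono_interval le_rfl hs.1 hst
      ((ae_restrict_mem measurableSet_Ioc).mono fun τ hτ => hfpos τ ⟨hτ.1.le, hτ.2.trans ht.2⟩)
      (hfi t ht)
  have hF' : ∀ t ∈ Ioo 0 T, HasDerivAt F (f t) t := fun t ht =>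
    intervalIntegral.integral_hasDerivAt_right (hfi t (Ioo_subset_Icc_self ht))
      ((hf.mono Ioo_subset_Icc_self).stronglyMeasurableAtFilter isOpen_Ioo t ht)
      (hf.continuousAt (Icc_mem_nhds ht.1 ht.2))
  have hF_zero : ∀ t ∈ Icc 0 T, F t = 0 :=
    eq_zero_of_osgood one_pos hFc intervalIntegral.integral_same hFm hF'
      (fun s hs => osgoodModulus_pos hε0 hΘ1 hs.1 hs.2)
      (fun s hs => hasDerivAt_osgoodPotential hε0 hΘcont hΘ1 hs.1 hs.2)
      (tendsto_osgoodPotential_nhdsGT_zero hε0 hΘcont hΘ1 hΘdiv)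
      fun t ht hFt => le_two_mul_osgoodModulus_of_forall_nat hK hε0 hΘmono hΘ1 hFt.1 hFt.2
        fun N hN => hyp N hN t (Ioo_subset_Icc_self ht)
  intro t ht
  refine le_antisymm (nonpos_of_forall_le_mul_two_rpow (K := K) hε0 fun N hN => ?_) (hfpos t ht)
  simpa [F, hF_zero t ht] using hyp N hN t ht

open MeasureTheory in
theorem stmt_18 (T : ℝ) (hT : 0 ≤ T) (f : ℝ → ℝ)
    (hf : ContinuousOn f (Set.Icc 0 T)) (hf0 : f 0 = 0)
    (hfpos : ∀ t ∈ Set.Icc 0 T, 0 ≤ f t)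
    (K ε : ℝ) (hK : 0 ≤ K) (hε0 : 0 < ε) (hε1 : ε < 1)
    (Θ : ℝ → ℝ) (hΘcont : ContinuousOn Θ (Set.Ici 1))
    (hΘmono : MonotoneOn Θ (Set.Ici 1)) (hΘ1 : ∀ s : ℝ, 1 ≤ s → 1 ≤ Θ s)
    (hΘdiv : ∫⁻ s in Set.Ioi (1 : ℝ), ENNReal.ofReal (1 / Θ s) = ⊤)
    (hyp : ∀ N : ℕ, 1 ≤ N → ∀ t ∈ Set.Icc 0 T,
      f t ≤ K * Θ N * (∫ τ in (0 : ℝ)..t, f τ) + K * 2 ^ (-(N : ℝ) * ε)) :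
    ∀ t ∈ Set.Icc 0 T, f t = 0 :=
  stmt_18_general T f hf hfpos K ε hK hε0 Θ hΘcont hΘmono hΘ1 hΘdiv hyp
end

section
/- Let $a \in (0,1)$ and define $g : \mathbb{R}^2 \to \mathbb{R}$ by $g(x) = \log(e + \log|x|^{-1})$ for $0 < |x| \le 1$ and $g(x) = 0$ for $|x| > 1$ (and $g(0)$ arbitrary). Then for every real $p \ge 1$, $g \in L^p(\mathbb{R}^2)$ and there is a constant $C$ independent of $p$ with $\|g\|_{L^p(\mathbb{R}^2)} \le C \log(1 + p)$. -/
/-!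
With `t = log ‖x‖⁻¹`, everything rests on `log (e + t) ≤ log (e + p) * exp (t / p)`: the tangent
line of `log` at `e + p` gives `log (e + t) ≤ log (e + p) + t / (e + p)`, and `1 + s ≤ exp s`.
Raised to the power `p` this reads `|g x| ^ p ≤ log (e + p) ^ p * ‖x‖⁻¹` on the unit ball, and
`‖x‖⁻¹` is integrable near the origin of the plane, so
`‖g‖_p ≤ log (e + p) * (∫_{|x| ≤ 1} ‖x‖⁻¹) ^ (1 / p)`; finally `log (e + p) ≤ 3 log (1 + p)`.
-/

open MeasureTheory Metric Real Set
open scoped ENNReal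

lemma log_exp_one_add_le_mul_exp_div {p t : ℝ} (hp : 0 < p) (ht : 0 ≤ t) :
    log (exp 1 + t) ≤ log (exp 1 + p) * exp (t / p) := by
  have he : 0 < exp 1 := exp_pos 1
  set a := log (exp 1 + p)
  have ha : 1 ≤ a := by
    rw [← log_exp 1]
    exact log_le_log he (by linarith)
  have hconc : log (exp 1 + t) ≤ a + t / (exp 1 + p) := by
    have h := log_le_sub_one_of_pos (x := (exp 1 + t) / (exp 1 + p)) (by positivity)
    rw [log_div (by positivity) (by positivity)] at h
    have : (exp 1 + t) / (exp 1 + p) - 1 ≤ t / (exp 1 + p) := by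
      rw [sub_le_iff_le_add, div_add_one (by positivity : exp 1 + p ≠ 0),
        div_le_div_iff_of_pos_right (by positivity)]
      linarith
    linarith
  have hstep : t / (exp 1 + p) ≤ a * (t / p) := by
    calc t / (exp 1 + p) ≤ t / p := div_le_div_of_nonneg_left ht hp (by linarith)
      _ ≤ a * (t / p) := le_mul_of_one_le_left (by positivity) ha
  calc log (exp 1 + t) ≤ a * (t / p + 1) := by linarith
    _ ≤ a * exp (t / p) := by gcongr; linarith [add_one_le_exp (t / p)]

lemma log_exp_one_add_log_inv_rpow_le {p r : ℝ} (hp : 0 < p) (hr₀ : 0 < r) (hr₁ : r ≤ 1) :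
    log (exp 1 + log r⁻¹) ^ p ≤ log (exp 1 + p) ^ p * r⁻¹ := by
  have hlog : 0 ≤ log r⁻¹ := log_nonneg (one_le_inv₀ hr₀ |>.mpr hr₁)
  have h := log_exp_one_add_le_mul_exp_div hp hlog
  calc log (exp 1 + log r⁻¹) ^ p ≤ (log (exp 1 + p) * exp (log r⁻¹ / p)) ^ p := by
        gcongr
        exact log_nonneg (by linarith [add_one_le_exp 1])
    _ = log (exp 1 + p) ^ p * r⁻¹ := by
        rw [mul_rpow (log_nonneg (by linarith [add_one_le_exp 1])) (exp_pos _).le, ← exp_mul,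
          div_mul_cancel₀ _ hp.ne', exp_log (inv_pos.mpr hr₀)]

lemma log_exp_one_add_le_three_mul_log_one_add {p : ℝ} (hp : 1 ≤ p) :
    log (exp 1 + p) ≤ 3 * log (1 + p) := by
  have hlog2 : 1 / 2 ≤ log (1 + p) := by
    have : (1 / 2 : ℝ) < log 2 := by linarith [log_two_gt_d9]
    linarith [log_le_log (by norm_num) (by linarith : (2 : ℝ) ≤ 1 + p)]
  calc log (exp 1 + p) ≤ log (exp 1 * (1 + p)) :=
        log_le_log (by positivity) (by nlinarith [add_one_le_exp 1])
    _ = 1 + log (1 + p) := by rw [log_mul (exp_pos 1).ne' (by positivity), log_exp]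
    _ ≤ 3 * log (1 + p) := by linarith

lemma rpow_one_div_le_max_one {x p : ℝ} (hx : 0 ≤ x) (hp : 1 ≤ p) : x ^ (1 / p) ≤ max 1 x := by
  have hq : 0 ≤ 1 / p := by positivity
  rcases le_or_gt x 1 with h | h
  · exact (rpow_le_one hx h hq).trans (le_max_left _ _)
  · calc x ^ (1 / p) ≤ x ^ (1 : ℝ) :=
          rpow_le_rpow_of_exponent_le h.le (div_le_one_of_le₀ hp (by linarith))
      _ ≤ max 1 x := by rw [rpow_one]; exact le_max_right _ _

lemma integrableOn_ball_norm_inv {E : Type*} [NormedAddCommGroup E] [NormedSpace ℝ E]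
    [MeasurableSpace E] [BorelSpace E] [FiniteDimensional ℝ E] (μ : Measure E)
    [μ.IsAddHaarMeasure] (hE : 2 ≤ Module.finrank ℝ E) (r : ℝ) :
    IntegrableOn (fun x : E ↦ ‖x‖⁻¹) (ball 0 r) μ := by
  have : Nontrivial E := Module.nontrivial_of_finrank_pos (R := ℝ) (by omega)
  rw [integrableOn_fun_norm_addHaar μ (f := fun y ↦ y⁻¹)]
  refine (continuous_pow (Module.finrank ℝ E - 2)).integrableOn_Icc.mono_set Ioo_subset_Icc_self
    |>.congr_fun (fun y hy ↦ ?_) measurableSet_Ioo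
  obtain ⟨n, hn⟩ := Nat.exists_eq_add_of_le hE
  simp only [hn, smul_eq_mul]
  rw [show 2 + n - 1 = n + 1 by omega, show 2 + n - 2 = n by omega, pow_succ,
    mul_inv_cancel_right₀ (ne_of_gt hy.1)]

lemma eLpNorm_le_of_enorm_rpow_le {α F : Type*} [MeasurableSpace α] [NormedAddCommGroup F]
    {μ : Measure α} {f : α → F} {w : α → ℝ≥0∞} {p a : ℝ} (hp : 0 < p)
    (hf : ∀ᵐ x ∂μ, ‖f x‖ₑ ^ p ≤ ENNReal.ofReal a ^ p * w x) :
    eLpNorm f (ENNReal.ofReal p) μ ≤ ENNReal.ofReal a * (∫⁻ x, w x ∂μ) ^ (1 / p) := by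
  rw [eLpNorm_eq_lintegral_rpow_enorm_toReal (by simpa using hp) ENNReal.ofReal_ne_top,
    ENNReal.toReal_ofReal hp.le]
  calc (∫⁻ x, ‖f x‖ₑ ^ p ∂μ) ^ (1 / p) ≤ (ENNReal.ofReal a ^ p * ∫⁻ x, w x ∂μ) ^ (1 / p) := by
        gcongr
        rw [← lintegral_const_mul' _ _ (by simp [hp.le])]
        exact lintegral_mono_ae hf
    _ = ENNReal.ofReal a * (∫⁻ x, w x ∂μ) ^ (1 / p) := by
        rw [ENNReal.mul_rpow_of_nonneg _ _ (by positivity), ← ENNReal.rpow_mul,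
          mul_one_div_cancel hp.ne', ENNReal.rpow_one]

noncomputable def logLogProfile (r : ℝ) : ℝ := if r ≤ 1 then log (exp 1 + log r⁻¹) else 0

lemma measurable_logLogProfile : Measurable logLogProfile :=
  Measurable.ite measurableSet_Iic (by fun_prop) measurable_const

lemma ae_eq_logLogProfile_norm {E : Type*} [NormedAddCommGroup E] [MeasurableSpace E]
    {μ : Measure E} [NullSingletonClass μ] {g : E → ℝ}
    (hg₁ : ∀ x, 0 < ‖x‖ → ‖x‖ ≤ 1 → g x = log (exp 1 + log ‖x‖⁻¹))
    (hg₂ : ∀ x, 1 < ‖x‖ → g x = 0) :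
    g =ᵐ[μ] fun x ↦ logLogProfile ‖x‖ := by
  filter_upwards [Measure.ae_ne μ 0] with x hx
  unfold logLogProfile
  split_ifs with h
  · exact hg₁ x (norm_pos_iff.mpr hx) h
  · exact hg₂ x (not_le.mp h)

lemma eLpNorm_logLogProfile_norm_le {E : Type*} [NormedAddCommGroup E] [MeasurableSpace E]
    [OpensMeasurableSpace E] (μ : Measure E) [NullSingletonClass μ] {p : ℝ} (hp : 0 < p) :
    eLpNorm (fun x ↦ logLogProfile ‖x‖) (ENNReal.ofReal p) μ ≤
      ENNReal.ofReal (log (exp 1 + p)) *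
        (∫⁻ x in closedBall 0 1, ENNReal.ofReal ‖x‖⁻¹ ∂μ) ^ (1 / p) := by
  rw [← lintegral_indicator measurableSet_closedBall]
  refine eLpNorm_le_of_enorm_rpow_le hp ?_
  have ha : 0 ≤ log (exp 1 + p) := log_nonneg (by linarith [add_one_le_exp 1])
  filter_upwards [Measure.ae_ne μ 0] with x hx
  have hx₀ : 0 < ‖x‖ := norm_pos_iff.mpr hx
  by_cases h : ‖x‖ ≤ 1
  · have hL : 0 ≤ log (exp 1 + log ‖x‖⁻¹) :=
      log_nonneg (by linarith [add_one_le_exp 1, log_nonneg (one_le_inv₀ hx₀ |>.mpr h)])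
    rw [logLogProfile, if_pos h, Real.enorm_eq_ofReal_abs, abs_of_nonneg hL,
      indicator_of_mem (mem_closedBall_zero_iff.mpr h), ENNReal.ofReal_rpow_of_nonneg hL hp.le,
      ENNReal.ofReal_rpow_of_nonneg ha hp.le, ← ENNReal.ofReal_mul (rpow_nonneg ha p)]
    exact ENNReal.ofReal_le_ofReal (log_exp_one_add_log_inv_rpow_le hp hx₀ h)
  · rw [logLogProfile, if_neg h, enorm_zero, ENNReal.zero_rpow_of_pos hp]
    exact zero_le

open MeasureTheory in
theorem stmt_19 (g : EuclideanSpace ℝ (Fin 2) → ℝ)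
    (hg1 : ∀ x : EuclideanSpace ℝ (Fin 2), 0 < ‖x‖ → ‖x‖ ≤ 1 →
      g x = Real.log (Real.exp 1 + Real.log ‖x‖⁻¹))
    (hg2 : ∀ x : EuclideanSpace ℝ (Fin 2), 1 < ‖x‖ → g x = 0) :
    ∃ C : ℝ, 0 < C ∧ ∀ p : ℝ, 1 ≤ p →
      MemLp g (ENNReal.ofReal p) volume ∧
        eLpNorm g (ENNReal.ofReal p) volume ≤ ENNReal.ofReal (C * Real.log (1 + p)) := by
  have hae : g =ᵐ[volume] fun x ↦ logLogProfile ‖x‖ := ae_eq_logLogProfile_norm hg1 hg2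
  have hJ : ∫⁻ x in closedBall (0 : EuclideanSpace ℝ (Fin 2)) 1, ENNReal.ofReal ‖x‖⁻¹ ≠ ∞ :=
    ((integrableOn_ball_norm_inv volume (by simp) 2).mono_set
      (closedBall_subset_ball one_lt_two)).lintegral_lt_top.ne
  set I := (∫⁻ x in closedBall (0 : EuclideanSpace ℝ (Fin 2)) 1, ENNReal.ofReal ‖x‖⁻¹).toReal
  refine ⟨3 * max 1 I, by positivity, fun p hp ↦ ?_⟩
  have hbound : eLpNorm g (ENNReal.ofReal p) volume ≤
      ENNReal.ofReal (3 * max 1 I * log (1 + p)) := by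
    rw [eLpNorm_congr_ae hae]
    calc _ ≤ ENNReal.ofReal (log (exp 1 + p)) *
            (∫⁻ x in closedBall 0 1, ENNReal.ofReal ‖x‖⁻¹) ^ (1 / p) :=
          eLpNorm_logLogProfile_norm_le volume (by linarith)
      _ = ENNReal.ofReal (log (exp 1 + p)) * ENNReal.ofReal (I ^ (1 / p)) := by
          rw [← ENNReal.ofReal_toReal hJ, ENNReal.ofReal_rpow_of_nonneg ENNReal.toReal_nonneg
            (by positivity)]
      _ ≤ ENNReal.ofReal (3 * log (1 + p)) * ENNReal.ofReal (max 1 I) := by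
          gcongr
          exacts [log_exp_one_add_le_three_mul_log_one_add hp,
            rpow_one_div_le_max_one ENNReal.toReal_nonneg hp]
      _ = ENNReal.ofReal (3 * max 1 I * log (1 + p)) := by
          rw [← ENNReal.ofReal_mul (mul_nonneg zero_le_three (log_nonneg (by linarith)))]
          ring_nf
  have hmeas : AEStronglyMeasurable g volume :=
    (measurable_logLogProfile.comp measurable_norm).aestronglyMeasurable.congr hae.symm
  exact ⟨⟨hmeas, hbound.trans_lt ENNReal.ofReal_lt_top⟩, hbound⟩
end
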